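/- arXiv:math/0010159 — 4 statements merged into one kernel-verified Lean document; each statement's English description precedes it below -/
import Mathlib

section
/- Let w ∈ W̃_n, let a < b be integers with w(a) > w(b), and let k be an integer such that L(s_k ∘ w) = L(w) + 1. Then (s_k ∘ w)(a) > (s_k ∘ w)(b). -/
/-!
Each value moves by at most one under `s_k`, so `s_k` keeps `w b < w a` unless `w b ≡ k` and
`w a = w b + 1`. In that case the only pair of window positions whose values lie in the classes
`k` and `k + 1` is that of the representatives of `a` and `b`, so only its term of `L` changes;
since `a < b`, the floor `⌊(w q - w p)/n⌋` of that pair moves towards zero, and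
`L(s_k w) = L(w) - 1`.
-/

/-- A bijection of `ℤ` satisfying the periodicity `σ(i + n) = σ(i) + n`. -/
def IsAff (n : ℕ) (σ : ℤ → ℤ) : Prop :=
  Function.Bijective σ ∧ ∀ i : ℤ, σ (i + (n : ℤ)) = σ i + (n : ℤ)

/-- The Iwahori–Matsumoto length `L(w) = Σ_{1 ≤ i < j ≤ n} |⌊(w(j) - w(i))/n⌋|`. -/
noncomputable def affLen (n : ℕ) (w : ℤ → ℤ) : ℕ :=
  ∑ p ∈ ((Finset.Icc (1 : ℤ) (n : ℤ)) ×ˢ (Finset.Icc (1 : ℤ) (n : ℤ))).filter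
      (fun p => p.1 < p.2),
    (Int.fdiv (w p.2 - w p.1) (n : ℤ)).natAbs

/-- The simple reflection `s_k` of the affine Weyl group of type `Ã_{n-1}`. -/
def sRef (n : ℕ) (k j : ℤ) : ℤ :=
  if j % (n : ℤ) = k % (n : ℤ) then j + 1
  else if j % (n : ℤ) = (k + 1) % (n : ℤ) then j - 1
  else j

def SwapsResidues (n : ℕ) (k x y : ℤ) : Prop :=
  x ≡ k [ZMOD n] ∧ y ≡ k + 1 [ZMOD n] ∨ x ≡ k + 1 [ZMOD n] ∧ y ≡ k [ZMOD n]

lemma Finset.sum_add_eq_sum_of_eq_of_ne {α M : Type*} [DecidableEq α] [AddCommMonoid M]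
    {s : Finset α} {f g : α → M} {a : α} (c : M) (ha : a ∈ s) (hfg : ∀ b ∈ s, b ≠ a → f b = g b)
    (h : f a + c = g a) : ∑ b ∈ s, f b + c = ∑ b ∈ s, g b := by
  rw [← Finset.add_sum_erase s f ha, ← Finset.add_sum_erase s g ha, add_right_comm, h,
    Finset.sum_congr rfl fun b hb =>
      hfg b (Finset.mem_of_mem_erase hb) (Finset.ne_of_mem_erase hb)]

section Int

variable {n : ℕ}

lemma Int.not_modEq_add_one (hn : 2 ≤ n) (k : ℤ) : ¬ k ≡ k + 1 [ZMOD n] := by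
  rw [Int.modEq_iff_dvd, add_sub_cancel_left]
  intro h
  have := Int.le_of_dvd one_pos h
  omega

lemma Int.exists_mem_Icc_add_mul (hn : 0 < n) (a : ℤ) :
    ∃ i ∈ Finset.Icc 1 (n : ℤ), ∃ m, a = i + n * m := by
  refine ⟨(a - 1) % n + 1, ?_, (a - 1) / n, ?_⟩
  · have := Int.emod_nonneg (a - 1) (by omega : (n : ℤ) ≠ 0)
    have := Int.emod_lt_of_pos (a - 1) (by omega : (0 : ℤ) < n)
    simp only [Finset.mem_Icc]
    omega
  · have := Int.emod_add_mul_ediv (a - 1) n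
    omega

lemma Int.exists_fdiv_eq_of_modEq_one (hn : 2 ≤ n) {d : ℤ} (hd : d ≡ 1 [ZMOD n]) :
    ∃ m, d = 1 + n * m ∧ d.fdiv n = m ∧ (d - 2).fdiv n = m - 1 := by
  obtain ⟨m, hm⟩ := Int.modEq_iff_dvd.mp hd.symm
  refine ⟨m, by omega, ?_, ?_⟩ <;>
    rw [Int.fdiv_eq_ediv_of_nonneg _ (by omega), Int.ediv_eq_iff_of_pos (by omega)] <;>
    constructor <;> linarith

end Int

section SimpleReflection

variable {n : ℕ} {k : ℤ}

lemma sRef_of_modEq {x : ℤ} (h : x ≡ k [ZMOD n]) : sRef n k x = x + 1 := if_pos h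

lemma sRef_of_modEq_add_one (hn : 2 ≤ n) {x : ℤ} (h : x ≡ k + 1 [ZMOD n]) :
    sRef n k x = x - 1 :=
  (if_neg fun h' => Int.not_modEq_add_one hn k (h'.symm.trans h)).trans (if_pos h)

lemma sRef_of_not_modEq {x : ℤ} (h : ¬ x ≡ k [ZMOD n]) (h' : ¬ x ≡ k + 1 [ZMOD n]) :
    sRef n k x = x :=
  (if_neg h).trans (if_neg h')

lemma sub_one_le_sRef (x : ℤ) : x - 1 ≤ sRef n k x := by
  unfold sRef; split_ifs <;> omega

lemma le_sRef_of_not_modEq_add_one {x : ℤ} (h : ¬ x ≡ k + 1 [ZMOD n]) : x ≤ sRef n k x := by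
  unfold sRef; split_ifs <;> first | omega | contradiction

lemma sRef_add_mul (x m : ℤ) : sRef n k (x + n * m) = sRef n k x + n * m := by
  unfold sRef
  simp only [Int.add_mul_emod_self_left]
  split_ifs <;> ring

lemma sRef_lt_sRef (hn : 2 ≤ n) {x y : ℤ} (hxy : x < y)
    (h : ¬ (x ≡ k [ZMOD n] ∧ y = x + 1)) :
    sRef n k x < sRef n k y := by
  by_cases hx : x ≡ k [ZMOD n]
  · have hxy : x + 2 ≤ y := by
      have : y ≠ x + 1 := fun e => h ⟨hx, e⟩
      omega
    rw [sRef_of_modEq hx]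
    by_cases hy : y ≡ k + 1 [ZMOD n]
    · have : y ≠ x + 2 := by
        rintro rfl
        exact Int.not_modEq_add_one hn (k + 1)
          (by simpa [add_assoc] using hy.symm.trans (hx.add_right 2))
      rw [sRef_of_modEq_add_one hn hy]
      omega
    · exact lt_of_lt_of_le (by omega) (le_sRef_of_not_modEq_add_one hy)
  by_cases hx' : x ≡ k + 1 [ZMOD n]
  · rw [sRef_of_modEq_add_one hn hx']
    exact lt_of_lt_of_le (by omega) (sub_one_le_sRef y)
  rw [sRef_of_not_modEq hx hx']
  by_cases hy : y ≡ k + 1 [ZMOD n]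
  · have : y ≠ x + 1 := by
      rintro rfl
      exact hx (Int.ModEq.add_right_cancel' 1 hy)
    rw [sRef_of_modEq_add_one hn hy]
    omega
  · exact lt_of_lt_of_le hxy (le_sRef_of_not_modEq_add_one hy)

lemma sRef_le_sRef_iff (hn : 2 ≤ n) {x y : ℤ} (h : ¬ SwapsResidues n k x y) :
    sRef n k x ≤ sRef n k y ↔ x ≤ y := by
  constructor
  · intro hle
    by_contra! hyx
    refine (sRef_lt_sRef hn hyx fun ⟨hy, hxy⟩ => h (Or.inr ⟨?_, hy⟩)).not_ge hle
    rw [hxy]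
    exact hy.add_right 1
  · intro hxy
    rcases hxy.lt_or_eq with hxy | rfl
    · refine (sRef_lt_sRef hn hxy fun ⟨hx, hyx⟩ => h (Or.inl ⟨hx, ?_⟩)).le
      rw [hyx]
      exact hx.add_right 1
    · rfl

/-- `q ≤ ⌊d / n⌋ ↔ n * q ≤ d`, and `sRef n k` commutes with translation by `n * q`, so this is
`sRef_le_sRef_iff` applied to `x + n * q` and `y`. -/
lemma fdiv_sRef_sub_sRef (hn : 2 ≤ n) {x y : ℤ} (h : ¬ SwapsResidues n k x y) :
    (sRef n k y - sRef n k x).fdiv n = (y - x).fdiv n := by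
  have hn0 : (0 : ℤ) < n := by omega
  rw [Int.fdiv_eq_ediv_of_nonneg _ hn0.le, Int.fdiv_eq_ediv_of_nonneg _ hn0.le]
  refine eq_of_forall_le_iff fun q => ?_
  have hq : ¬ SwapsResidues n k (x + n * q) y := by
    simpa only [SwapsResidues, Int.ModEq, Int.add_mul_emod_self_left] using h
  rw [Int.le_ediv_iff_mul_le hn0, Int.le_ediv_iff_mul_le hn0, le_sub_iff_add_le',
    le_sub_iff_add_le', mul_comm, ← sRef_add_mul, sRef_le_sRef_iff hn hq]

lemma natAbs_fdiv_sRef_sub_sRef_add_one (hn : 2 ≤ n) {x y : ℤ}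
    (h : x ≡ k [ZMOD n] ∧ y ≡ k + 1 [ZMOD n] ∧ x + 1 < y ∨
      x ≡ k + 1 [ZMOD n] ∧ y ≡ k [ZMOD n] ∧ y < x) :
    ((sRef n k y - sRef n k x).fdiv n).natAbs + 1 = ((y - x).fdiv n).natAbs := by
  rcases h with ⟨hx, hy, hxy⟩ | ⟨hx, hy, hxy⟩
  · rw [sRef_of_modEq hx, sRef_of_modEq_add_one hn hy,
      show y - 1 - (x + 1) = y - x - 2 by ring]
    obtain ⟨m, hd, hm, hm'⟩ := Int.exists_fdiv_eq_of_modEq_one hn (by simpa using hy.sub hx)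
    have : 0 < m := by nlinarith
    omega
  · rw [sRef_of_modEq_add_one hn hx, sRef_of_modEq hy,
      show y - x = y + 1 - (x - 1) - 2 by ring]
    obtain ⟨m, hd, hm, hm'⟩ := Int.exists_fdiv_eq_of_modEq_one hn (d := y + 1 - (x - 1))
      (by simpa using (hy.add_right 1).sub (hx.sub_right 1))
    have : m ≤ 0 := by nlinarith
    omega

end SimpleReflection

namespace IsAff

variable {n : ℕ} {w : ℤ → ℤ}

lemma map_add_mul (hw : IsAff n w) (i m : ℤ) : w (i + n * m) = w i + n * m := by
  induction m using Int.induction_on with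
  | zero => simp
  | succ m ih => rw [mul_add_one, ← add_assoc, hw.2, ih, add_assoc]
  | pred m ih =>
    have := hw.2 (i + n * (-m - 1))
    rw [show i + n * (-m - 1) + n = i + n * -m by ring, ih] at this
    linarith

lemma eq_of_modEq (hw : IsAff n w) {p q : ℤ} (hp : p ∈ Finset.Icc 1 (n : ℤ))
    (hq : q ∈ Finset.Icc 1 (n : ℤ)) (h : w p ≡ w q [ZMOD n]) : p = q := by
  obtain ⟨m, hm⟩ := Int.modEq_iff_dvd.mp h
  have hqp : q = p + n * m := hw.1.1 (by rw [hw.map_add_mul]; omega)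
  simp only [Finset.mem_Icc] at hp hq
  have := Int.eq_zero_of_abs_lt_dvd ⟨m, by omega⟩ (abs_sub_lt_iff.mpr (by omega) : |q - p| < n)
  omega

variable {k : ℤ}

lemma eq_of_swapsResidues (hw : IsAff n w) {p q p' q' : ℤ}
    (hp : p ∈ Finset.Icc 1 (n : ℤ)) (hq : q ∈ Finset.Icc 1 (n : ℤ))
    (hp' : p' ∈ Finset.Icc 1 (n : ℤ)) (hq' : q' ∈ Finset.Icc 1 (n : ℤ)) (hpq : p < q)
    (hpq' : p' < q') (h : SwapsResidues n k (w p) (w q))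
    (h' : SwapsResidues n k (w p') (w q')) :
    (p', q') = (p, q) := by
  rcases h with ⟨h₁, h₂⟩ | ⟨h₁, h₂⟩ <;> rcases h' with ⟨h₁', h₂'⟩ | ⟨h₁', h₂'⟩ <;>
  first
  | rw [hw.eq_of_modEq hp' hp (h₁'.trans h₁.symm), hw.eq_of_modEq hq' hq (h₂'.trans h₂.symm)]
  | have := hw.eq_of_modEq hp' hq (h₁'.trans h₂.symm)
    have := hw.eq_of_modEq hq' hp (h₂'.trans h₁.symm)
    omega

lemma affLen_sRef_add_one_of_swapsResidues (hn : 2 ≤ n) (hw : IsAff n w) {p q : ℤ}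
    (hp : p ∈ Finset.Icc 1 (n : ℤ)) (hq : q ∈ Finset.Icc 1 (n : ℤ)) (hpq : p < q)
    (h : SwapsResidues n k (w p) (w q))
    (hpair : ((sRef n k (w q) - sRef n k (w p)).fdiv n).natAbs + 1 =
      ((w q - w p).fdiv n).natAbs) :
    affLen n (fun j => sRef n k (w j)) + 1 = affLen n w := by
  refine Finset.sum_add_eq_sum_of_eq_of_ne (a := (p, q)) 1 (by simp_all) ?_ hpair
  rintro ⟨p', q'⟩ hmem hne
  simp only [Finset.mem_filter, Finset.mem_product] at hmem
  rw [fdiv_sRef_sub_sRef hn fun h' =>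
    hne (hw.eq_of_swapsResidues hp hq hmem.1.1 hmem.1.2 hpq hmem.2 h h')]

/-- The only term of `affLen` that changes is the one for the window representatives of `a`
and `b`. -/
lemma affLen_sRef_add_one_of_lt (hn : 2 ≤ n) (hw : IsAff n w) {a b : ℤ} (hab : a < b)
    (hb : w b ≡ k [ZMOD n]) (ha : w a = w b + 1) :
    affLen n (fun j => sRef n k (w j)) + 1 = affLen n w := by
  have hn0 : (0 : ℤ) < n := by omega
  obtain ⟨i, hi, t, rfl⟩ := Int.exists_mem_Icc_add_mul (n := n) (by omega) b
  obtain ⟨j, hj, s, rfl⟩ := Int.exists_mem_Icc_add_mul (n := n) (by omega) a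
  simp only [hw.map_add_mul] at hb ha
  have hik : w i ≡ k [ZMOD n] := (Int.add_mul_emod_self_left _ _ _).symm.trans hb
  have hjk : w j ≡ k + 1 [ZMOD n] := by
    have : w j = w i + 1 + n * (t - s) := by linarith
    rw [this]
    exact (Int.add_mul_emod_self_left _ _ _).trans (hik.add_right 1)
  simp only [Finset.mem_Icc] at hi hj
  rcases lt_trichotomy i j with hij | rfl | hij
  · refine affLen_sRef_add_one_of_swapsResidues hn hw (by simpa) (by simpa) hij
      (Or.inl ⟨hik, hjk⟩) (natAbs_fdiv_sRef_sub_sRef_add_one hn (Or.inl ⟨hik, hjk, ?_⟩))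
    omega
  · exact absurd (hik.symm.trans hjk) (Int.not_modEq_add_one hn k)
  · refine affLen_sRef_add_one_of_swapsResidues hn hw (by simpa) (by simpa) hij
      (Or.inr ⟨hjk, hik⟩) (natAbs_fdiv_sRef_sub_sRef_add_one hn (Or.inr ⟨hjk, hik, ?_⟩))
    have hst : s - t < 1 := lt_of_mul_lt_mul_left (by linarith) hn0.le
    have := mul_le_mul_of_nonneg_left (show s ≤ t by omega) hn0.le
    omega

end IsAff

/-- Lemma 2.5.1: if left multiplication by `s_k` increases the length of `w`,
then it preserves every inversion of `w`. -/
theorem stmt9 (n : ℕ) (hn : 2 ≤ n) (w : ℤ → ℤ) (hw : IsAff n w) (a b k : ℤ)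
    (hab : a < b) (hwab : w b < w a)
    (hlen : affLen n (fun j => sRef n k (w j)) = affLen n w + 1) :
    sRef n k (w b) < sRef n k (w a) := by
  by_contra hle
  have hdescent : w b ≡ k [ZMOD n] ∧ w a = w b + 1 := by
    by_contra hnot
    exact hle (sRef_lt_sRef hn hwab hnot)
  have := hw.affLen_sRef_add_one_of_lt hn hab hdescent.1 hdescent.2
  omega
end

section
/- Let w ∈ W̃_n and let i < j be integers with i ≢ j (mod n) and w(i) > w(j) (so (i, j) is a d-chain of w of length 2). Then for all integers a, b, the two integers i + an and j + bn never lie in a common d-antichain of w; explicitly, if x < y are the elements of {i + an, j + bn} arranged in increasing order, then it is not the case that both y − n < x and w(y) − n < w(x) < w(y). -/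
/-! Translating `i` and `j` by multiples of `n` changes the position gap `j - i` and the value
gap `w j - w i` by the same multiple of `n`. For a d-chain these gaps have opposite signs, while
for two elements of a d-antichain both gaps lie in `[0, n)`; no multiple of `n` achieves both. -/

open Set

lemma map_add_mul_of_map_add {n : ℤ} {w : ℤ → ℤ} (hw : ∀ i, w (i + n) = w i + n) (k x : ℤ) :
    w (x + k * n) = w x + k * n := by
  have hper : Function.Periodic (fun i => w i - i) n := fun i => by simp only [hw]; ring
  have hx : w (x + k * n) - (x + k * n) = w x - x := hper.int_mul k x
  linarith

lemma not_add_mul_mem_Ico_of_mul_neg {p q k n : ℤ} (hpq : p * q < 0) :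
    ¬ (p + k * n ∈ Ico 0 n ∧ q + k * n ∈ Ico 0 n) := by
  rintro ⟨⟨hp₀, hpn⟩, ⟨hq₀, hqn⟩⟩
  have hkn : 0 < k * n ∧ k * n < n := by
    rcases mul_neg_iff.mp hpq with ⟨hp, hq⟩ | ⟨hp, hq⟩ <;> constructor <;> linarith
  exact hkn.1.ne' (Int.eq_zero_of_abs_lt_dvd (dvd_mul_left n k) (abs_lt.mpr ⟨by linarith, hkn.2⟩))

theorem stmt10_general (n : ℕ) (w : ℤ → ℤ) (hw : IsAff n w) (i j : ℤ)
    (hij : i < j) (hchain : w j < w i) (a b : ℤ) :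
    ¬ (max (i + a * n) (j + b * n) - n < min (i + a * n) (j + b * n) ∧
       w (max (i + a * n) (j + b * n)) - n < w (min (i + a * n) (j + b * n)) ∧
       w (min (i + a * n) (j + b * n)) < w (max (i + a * n) (j + b * n))) := by
  have hshift := map_add_mul_of_map_add hw.2
  rintro ⟨hgap, hval_lo, hval_hi⟩
  rcases le_total (i + a * n) (j + b * n) with hle | hle
  · rw [max_eq_right hle, min_eq_left hle] at hgap hval_lo hval_hi
    rw [hshift, hshift] at hval_lo hval_hi
    exact not_add_mul_mem_Ico_of_mul_neg (p := j - i) (q := w j - w i) (k := b - a) (n := n)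
      (mul_neg_of_pos_of_neg (by linarith) (by linarith))
      ⟨⟨by linarith, by linarith⟩, ⟨by linarith, by linarith⟩⟩
  · rw [max_eq_left hle, min_eq_right hle] at hgap hval_lo hval_hi
    rw [hshift, hshift] at hval_lo hval_hi
    exact not_add_mul_mem_Ico_of_mul_neg (p := i - j) (q := w i - w j) (k := a - b) (n := n)
      (mul_neg_of_neg_of_pos (by linarith) (by linarith))
      ⟨⟨by linarith, by linarith⟩, ⟨by linarith, by linarith⟩⟩

/-- Half of Lemma 2.4.1: if `(i, j)` is a d-chain of `w` of length 2, then for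
all `a, b` the integers `i + an` and `j + bn` never lie in a common d-antichain
of `w`. -/
theorem stmt10 (n : ℕ) (hn : 2 ≤ n) (w : ℤ → ℤ) (hw : IsAff n w) (i j : ℤ)
    (hij : i < j) (hmod : ¬ Int.ModEq (n : ℤ) i j) (hchain : w j < w i) (a b : ℤ) :
    ¬ (max (i + a * n) (j + b * n) - n < min (i + a * n) (j + b * n) ∧
       w (max (i + a * n) (j + b * n)) - n < w (min (i + a * n) (j + b * n)) ∧
       w (min (i + a * n) (j + b * n)) < w (max (i + a * n) (j + b * n))) :=
  stmt10_general n w hw i j hij hchain a b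
end

section
/- Let w ∈ W̃_n and let i < j be integers forming a d-antichain of w, i.e. j − n < i and w(j) − n < w(i) < w(j). Then for all integers a, b, the two integers i + an and j + bn never form a d-chain of w; explicitly, if x < y are the elements of {i + an, j + bn} arranged in increasing order, then w(x) < w(y). -/
theorem map_add_zsmul_of_map_add {G : Type*} [AddCommGroup G] {f : G → G} {c : G}
    (hf : ∀ x, f (x + c) = f x + c) (k : ℤ) (x : G) : f (x + k • c) = f x + k • c := by
  have hper : Function.Periodic (fun x => f x - x) c := fun x => by
    simp only [hf]; abel
  have := hper.zsmul k x
  rw [sub_eq_sub_iff_add_eq_add] at this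
  rw [← add_right_cancel_iff (a := x), this]; abel

theorem IsAff.map_add_mul_s11 {n : ℕ} {w : ℤ → ℤ} (hw : IsAff n w) (x k : ℤ) :
    w (x + k * n) = w x + k * n := by
  simpa only [smul_eq_mul] using map_add_zsmul_of_map_add hw.2 k x

theorem Int.add_mul_lt_add_mul_of_le {x y n a b : ℤ} (hxy : x < y) (hn : 0 ≤ n) (hab : a ≤ b) :
    x + a * n < y + b * n := by
  have : a * n ≤ b * n := mul_le_mul_of_nonneg_right hab hn
  linarith

theorem Int.add_mul_lt_add_mul_of_lt {x y n a b : ℤ} (hyx : y < x + n) (hn : 0 ≤ n)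
    (hab : b < a) : y + b * n < x + a * n := by
  have : (b + 1) * n ≤ a * n := mul_le_mul_of_nonneg_right hab hn
  linarith

theorem stmt11_general (n : ℕ) (w : ℤ → ℤ) (hw : IsAff n w) (i j : ℤ)
    (hij : i < j) (h1 : j - n < i) (h2 : w j - n < w i) (h3 : w i < w j) (a b : ℤ) :
    w (min (i + a * n) (j + b * n)) < w (max (i + a * n) (j + b * n)) := by
  have hn : (0 : ℤ) ≤ n := n.cast_nonneg
  rcases le_or_gt a b with hab | hab
  · have hlt : i + a * n < j + b * n := Int.add_mul_lt_add_mul_of_le hij hn hab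
    rw [min_eq_left hlt.le, max_eq_right hlt.le, hw.map_add_mul_s11, hw.map_add_mul_s11]
    exact Int.add_mul_lt_add_mul_of_le h3 hn hab
  · have hlt : j + b * n < i + a * n := Int.add_mul_lt_add_mul_of_lt (by linarith) hn hab
    rw [min_eq_right hlt.le, max_eq_left hlt.le, hw.map_add_mul_s11, hw.map_add_mul_s11]
    exact Int.add_mul_lt_add_mul_of_lt (by linarith) hn hab

/-- Half of Lemma 2.4.1: if `(i, j)` is a d-antichain of `w` of length 2, then
for all `a, b` the integers `i + an` and `j + bn` never form a d-chain of `w`: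
arranging them in increasing order `x < y`, one has `w(x) < w(y)`. -/
theorem stmt11 (n : ℕ) (hn : 2 ≤ n) (w : ℤ → ℤ) (hw : IsAff n w) (i j : ℤ)
    (hij : i < j) (h1 : j - n < i) (h2 : w j - n < w i) (h3 : w i < w j) (a b : ℤ) :
    w (min (i + a * n) (j + b * n)) < w (max (i + a * n) (j + b * n)) :=
  stmt11_general n w hw i j hij h1 h2 h3 a b
end

section
/- For v = (v_1, …, v_n) ∈ ℤ^n define the translation t_v ∈ W̃_n by t_v(j) = j + v_r · n, where r ∈ {1, …, n} is determined by j ≡ r (mod n). Then: (i) L(t_v) = Σ_{1 ≤ i < j ≤ n} |v_j − v_i|; and (ii) if both v and u are weakly decreasing (v_1 ≥ v_2 ≥ … ≥ v_n and u_1 ≥ … ≥ u_n), then L(t_{v+u}) = L(t_v) + L(t_u). -/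
/-- The translation `t_v(j) = j + v_r · n` where `1 ≤ r ≤ n` and `j ≡ r (mod n)`,
so `r = (j - 1) % n + 1`. -/
def transl (n : ℕ) (v : ℤ → ℤ) : ℤ → ℤ :=
  fun j => j + v ((j - 1) % (n : ℤ) + 1) * n

/-! On `[1, n]` the translation `t_v` is `j ↦ j + v_j n`, so for `1 ≤ i < j ≤ n` the difference
`t_v(j) - t_v(i) = (j - i) + (v_j - v_i) n` has remainder `j - i ∈ [0, n)` and quotient
`v_j - v_i`; the `(i, j)` summand of `L(t_v)` is therefore `|v_j - v_i|`. For weakly decreasing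
`v` and `u` all the differences `v_j - v_i`, `u_j - u_i` are `≤ 0`, so their absolute values add. -/

lemma Int.fdiv_add_mul_self_of_lt {a b n : ℤ} (ha : 0 ≤ a) (han : a < n) :
    (a + b * n).fdiv n = b := by
  rw [Int.fdiv_eq_ediv_of_nonneg _ (by omega), Int.add_mul_ediv_right _ _ (by omega),
    Int.ediv_eq_zero_of_lt ha han, zero_add]

lemma transl_of_mem_Icc {n : ℕ} (v : ℤ → ℤ) {j : ℤ} (hj₁ : 1 ≤ j) (hjn : j ≤ n) :
    transl n v j = j + v j * n := by
  rw [transl, Int.emod_eq_of_lt (by omega) (by omega), sub_add_cancel]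

lemma fdiv_transl_sub_transl {n : ℕ} (v : ℤ → ℤ) {i j : ℤ} (hi₁ : 1 ≤ i) (hij : i < j)
    (hjn : j ≤ n) :
    (transl n v j - transl n v i).fdiv n = v j - v i := by
  rw [transl_of_mem_Icc v (by omega) hjn, transl_of_mem_Icc v hi₁ (by omega),
    show j + v j * n - (i + v i * n) = (j - i) + (v j - v i) * n by ring]
  exact Int.fdiv_add_mul_self_of_lt (by omega) (by omega)

lemma affLen_transl (n : ℕ) (v : ℤ → ℤ) :
    affLen n (transl n v) =
      ∑ p ∈ ((Finset.Icc (1 : ℤ) n) ×ˢ (Finset.Icc (1 : ℤ) n)).filter (fun p => p.1 < p.2),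
        (v p.2 - v p.1).natAbs := by
  refine Finset.sum_congr rfl fun p hp => ?_
  simp only [Finset.mem_filter, Finset.mem_product, Finset.mem_Icc] at hp
  rw [fdiv_transl_sub_transl v hp.1.1.1 hp.2 hp.1.2.2]

theorem stmt15_general (n : ℕ) :
    (∀ v : ℤ → ℤ,
      affLen n (transl n v) =
        ∑ p ∈ ((Finset.Icc (1 : ℤ) (n : ℤ)) ×ˢ (Finset.Icc (1 : ℤ) (n : ℤ))).filter
            (fun p => p.1 < p.2),
          (v p.2 - v p.1).natAbs) ∧
    (∀ v u : ℤ → ℤ,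
      (∀ i j : ℤ, 1 ≤ i → i ≤ j → j ≤ (n : ℤ) → v j ≤ v i) →
      (∀ i j : ℤ, 1 ≤ i → i ≤ j → j ≤ (n : ℤ) → u j ≤ u i) →
      affLen n (transl n (fun j => v j + u j)) =
        affLen n (transl n v) + affLen n (transl n u)) := by
  refine ⟨affLen_transl n, fun v u hv hu => ?_⟩
  simp only [affLen_transl, ← Finset.sum_add_distrib]
  refine Finset.sum_congr rfl fun p hp => ?_
  simp only [Finset.mem_filter, Finset.mem_product, Finset.mem_Icc] at hp
  obtain ⟨⟨⟨hi₁, -⟩, -, hjn⟩, hij⟩ := hp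
  rw [add_sub_add_comm, Int.natAbs_add_of_nonpos (sub_nonpos.2 (hv _ _ hi₁ hij.le hjn))
    (sub_nonpos.2 (hu _ _ hi₁ hij.le hjn))]

theorem stmt15 (n : ℕ) (hn : 2 ≤ n) :
    (∀ v : ℤ → ℤ,
      affLen n (transl n v) =
        ∑ p ∈ ((Finset.Icc (1 : ℤ) (n : ℤ)) ×ˢ (Finset.Icc (1 : ℤ) (n : ℤ))).filter
            (fun p => p.1 < p.2),
          (v p.2 - v p.1).natAbs) ∧
    (∀ v u : ℤ → ℤ,
      (∀ i j : ℤ, 1 ≤ i → i ≤ j → j ≤ (n : ℤ) → v j ≤ v i) →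
      (∀ i j : ℤ, 1 ≤ i → i ≤ j → j ≤ (n : ℤ) → u j ≤ u i) →
      affLen n (transl n (fun j => v j + u j)) =
        affLen n (transl n v) + affLen n (transl n u)) :=
  stmt15_general n
end
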